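/- Let φ ∈ (0, 2π) with φ ≠ π, and let E_φ := ([0,1) × {0}) ∪ { t·(cos φ, sin φ) : t ∈ [0,1) } ⊆ ℝ². Define f : E_φ → E_{π/2} by f((t, 0)) = (t, 0) for t ∈ [0,1) and f(t·(cos φ, sin φ)) = (0, t) for t ∈ [0,1). Then there exists a constant c(φ) > 0 such that κ(x, y, z) ≤ c(φ) · κ(f(x), f(y), f(z)) for all x, y, z ∈ E_φ. -/

import Mathlib

/-!
On `E_φ` the map `f` inverts the linear map `A` with `A e₁ = e₁`, `A e₂ = (cos φ, sin φ)`.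
In the plane, `κ(x, y, z) = 2 |det(y - x, z - x)| / (|x - y| |x - z| |y - z|)`. The linear map
`A` multiplies determinants by `det A = sin φ` and shrinks lengths by at most its least singular
value `√(1 - |cos φ|)`, so `κ(A x, A y, A z) ≤ |sin φ| (1 - |cos φ|)^(-3/2) κ(x, y, z)`, and
`sin φ ≠ 0` because `φ ≠ π`.
-/

open MeasureTheory Real
open scoped ENNReal NNReal Classical

/-- The Menger curvature of three points in `ℝⁿ`: the reciprocal of the circumradius,
`κ(x,y,z) = 2 dist(z, L_{x,y}) / (|x-z| |y-z|)` for pairwise distinct non-collinear points,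
and `0` otherwise. -/
noncomputable def menger {n : ℕ} (x y z : EuclideanSpace ℝ (Fin n)) : ℝ :=
  if x ≠ y ∧ y ≠ z ∧ x ≠ z ∧ ¬ Collinear ℝ ({x, y, z} : Set (EuclideanSpace ℝ (Fin n)))
  then 2 * Metric.infDist z (affineSpan ℝ ({x, y} : Set (EuclideanSpace ℝ (Fin n))) :
      Set (EuclideanSpace ℝ (Fin n))) / (dist x z * dist y z)
  else 0

/-- The point `(a, b) ∈ ℝ²` (with the Euclidean metric). -/
noncomputable def pt (a b : ℝ) : EuclideanSpace ℝ (Fin 2) :=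
  (WithLp.equiv 2 (Fin 2 → ℝ)).symm ![a, b]

/-- The one-corner set `E_φ = ([0,1) × {0}) ∪ [0,1)·(cos φ, sin φ)`. -/
noncomputable def Eset (φ : ℝ) : Set (EuclideanSpace ℝ (Fin 2)) :=
  {x | ∃ t ∈ Set.Ico (0:ℝ) 1, x = pt t 0} ∪
    {x | ∃ t ∈ Set.Ico (0:ℝ) 1, x = t • pt (Real.cos φ) (Real.sin φ)}

local notation "ℝ²" => EuclideanSpace ℝ (Fin 2)

def cross (u v : ℝ²) : ℝ := u 0 * v 1 - u 1 * v 0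

lemma cross_sub_smul_right (u v : ℝ²) (r : ℝ) : cross u (v - r • u) = cross u v := by
  simp only [cross, PiLp.sub_apply, PiLp.smul_apply, smul_eq_mul]
  ring

lemma cross_sq_add_inner_sq (u v : ℝ²) :
    cross u v ^ 2 + inner ℝ u v ^ 2 = ‖u‖ ^ 2 * ‖v‖ ^ 2 := by
  simp only [cross, EuclideanSpace.norm_sq_eq, PiLp.inner_apply, Fin.sum_univ_two,
    Real.norm_eq_abs, sq_abs, RCLike.inner_apply, conj_trivial]
  ring

lemma abs_cross_le (u v : ℝ²) : |cross u v| ≤ ‖u‖ * ‖v‖ :=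
  abs_le_of_sq_le_sq (by nlinarith [cross_sq_add_inner_sq u v, sq_nonneg (inner ℝ u v)])
    (by positivity)

lemma abs_cross_eq_of_inner_eq_zero {u v : ℝ²} (h : inner ℝ u v = 0) :
    |cross u v| = ‖u‖ * ‖v‖ := by
  have hsq := cross_sq_add_inner_sq u v
  rw [h] at hsq
  rw [← sq_eq_sq₀ (abs_nonneg _) (by positivity), sq_abs]
  linear_combination hsq

lemma infDist_affineSpan_pair {x y : ℝ²} (hxy : x ≠ y) (z : ℝ²) :
    Metric.infDist z (line[ℝ, x, y] : Set ℝ²) = |cross (y - x) (z - x)| / dist x y := by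
  set u := y - x
  have hu : ‖u‖ = dist x y := by rw [dist_comm, dist_eq_norm]
  have hu_pos : 0 < ‖u‖ := hu ▸ dist_pos.2 hxy
  have hcross (r : ℝ) : cross u (z - AffineMap.lineMap x y r) = cross u (z - x) := by
    rw [AffineMap.lineMap_apply, vsub_eq_sub, vadd_eq_add, sub_add_eq_sub_sub_swap,
      cross_sub_smul_right]
  rw [← hu]
  apply le_antisymm
  · set r := inner ℝ u (z - x) / ‖u‖ ^ 2
    have hfoot : inner ℝ u (z - AffineMap.lineMap x y r) = 0 := by
      rw [AffineMap.lineMap_apply, vsub_eq_sub, vadd_eq_add, sub_add_eq_sub_sub_swap,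
        inner_sub_right, inner_smul_right, real_inner_self_eq_norm_sq, sub_eq_zero]
      exact (div_mul_cancel₀ _ (by positivity)).symm
    refine (Metric.infDist_le_dist_of_mem (AffineMap.lineMap_mem_affineSpan_pair r x y)).trans
      (le_of_eq ?_)
    rw [← hcross r, abs_cross_eq_of_inner_eq_zero hfoot, dist_eq_norm]
    field_simp
  · by_contra! hlt
    obtain ⟨p, hp, hzp⟩ := (Metric.infDist_lt_iff ⟨x, left_mem_affineSpan_pair ℝ x y⟩).1 hlt
    obtain ⟨r, rfl⟩ := mem_affineSpan_pair_iff_exists_lineMap_eq.1 hp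
    rw [lt_div_iff₀ hu_pos, ← hcross r, dist_eq_norm, mul_comm] at hzp
    exact hzp.not_ge (abs_cross_le _ _)

lemma cross_eq_zero_of_collinear {x y z : ℝ²} (h : Collinear ℝ ({x, y, z} : Set ℝ²)) :
    cross (y - x) (z - x) = 0 := by
  obtain ⟨v, hv⟩ := (collinear_iff_of_mem (Set.mem_insert x _)).1 h
  obtain ⟨ry, hy⟩ := hv y (by simp)
  obtain ⟨rz, hz⟩ := hv z (by simp)
  rw [hy, hz, vadd_eq_add, vadd_eq_add, add_sub_cancel_right, add_sub_cancel_right]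
  simp only [cross, PiLp.smul_apply, smul_eq_mul]
  ring

-- Also in the degenerate cases: coincident points make the denominator vanish (and `a / 0 = 0`),
-- collinear ones the cross product.
lemma menger_eq_abs_cross (x y z : ℝ²) :
    menger x y z = 2 * |cross (y - x) (z - x)| / (dist x y * dist x z * dist y z) := by
  unfold menger
  split_ifs with h
  · rw [infDist_affineSpan_pair h.1, mul_div_assoc', div_div, mul_assoc]
  · simp only [not_and_or, not_not, ne_eq] at h
    rcases h with rfl | rfl | rfl | h <;> simp [cross_eq_zero_of_collinear, *]

lemma cross_toEuclideanLin (A : Matrix (Fin 2) (Fin 2) ℝ) (u v : ℝ²) :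
    cross (A.toEuclideanLin u) (A.toEuclideanLin v) = A.det * cross u v := by
  simp only [cross, Matrix.det_fin_two, Matrix.toEuclideanLin, Matrix.toLpLin_apply,
    PiLp.toLp_apply, Matrix.mulVec, dotProduct, Fin.sum_univ_two]
  ring

lemma menger_toEuclideanLin_le (A : Matrix (Fin 2) (Fin 2) ℝ) {m : ℝ} (hm : 0 < m)
    (hA : ∀ v, m * ‖v‖ ≤ ‖A.toEuclideanLin v‖) (x y z : ℝ²) :
    menger (A.toEuclideanLin x) (A.toEuclideanLin y) (A.toEuclideanLin z) ≤
      |A.det| / m ^ 3 * menger x y z := by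
  have hdist (p q : ℝ²) : m * dist p q ≤ dist (A.toEuclideanLin p) (A.toEuclideanLin q) := by
    simpa only [dist_eq_norm, map_sub] using hA (p - q)
  simp only [menger_eq_abs_cross, ← map_sub, cross_toEuclideanLin, abs_mul]
  rcases eq_or_ne (cross (y - x) (z - x)) 0 with hc | hc
  · simp [hc]
  have hxy : 0 < dist x y := dist_pos.2 (by rintro rfl; simp [cross] at hc)
  have hxz : 0 < dist x z := dist_pos.2 (by rintro rfl; simp [cross] at hc)
  have hyz : 0 < dist y z := dist_pos.2 (by rintro rfl; apply hc; simp only [cross]; ring)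
  calc 2 * (|A.det| * |cross (y - x) (z - x)|) /
        (dist (A.toEuclideanLin x) (A.toEuclideanLin y) *
          dist (A.toEuclideanLin x) (A.toEuclideanLin z) *
          dist (A.toEuclideanLin y) (A.toEuclideanLin z))
      ≤ 2 * (|A.det| * |cross (y - x) (z - x)|) /
          (m * dist x y * (m * dist x z) * (m * dist y z)) := by
        gcongr
        exacts [hdist x y, hdist x z, hdist y z]
    _ = |A.det| / m ^ 3 * (2 * |cross (y - x) (z - x)| / (dist x y * dist x z * dist y z)) := by
        field_simp

lemma toEuclideanLin_pt (A : Matrix (Fin 2) (Fin 2) ℝ) (a b : ℝ) :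
    A.toEuclideanLin (pt a b) = pt (A 0 0 * a + A 0 1 * b) (A 1 0 * a + A 1 1 * b) := by
  ext i
  fin_cases i <;> simp [pt, Matrix.toEuclideanLin, Matrix.toLpLin_apply]

lemma smul_pt (t a b : ℝ) : t • pt a b = pt (t * a) (t * b) := by
  ext i
  fin_cases i <;> simp [pt]

lemma sqrt_one_sub_abs_mul_norm_le {c s : ℝ} (hcs : c ^ 2 + s ^ 2 = 1) (v : ℝ²) :
    √(1 - |c|) * ‖v‖ ≤ ‖(!![1, c; 0, s] : Matrix (Fin 2) (Fin 2) ℝ).toEuclideanLin v‖ := by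
  have hc1 : |c| ≤ 1 := abs_le_one_iff_mul_self_le_one.2 (by nlinarith)
  rw [← pow_le_pow_iff_left₀ (by positivity) (norm_nonneg _) two_ne_zero, mul_pow,
    Real.sq_sqrt (by linarith)]
  simp only [EuclideanSpace.norm_sq_eq, Fin.sum_univ_two, Real.norm_eq_abs, sq_abs,
    Matrix.toEuclideanLin, Matrix.toLpLin_apply, Matrix.mulVec, dotProduct, Matrix.of_apply,
    Matrix.cons_val', Matrix.cons_val_zero, Matrix.cons_val_fin_one, Matrix.cons_val_one,
    one_mul, zero_mul, zero_add]
  rcases abs_cases c with ⟨habs, -⟩ | ⟨habs, hc0⟩ <;> rw [habs]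
  · nlinarith [mul_nonneg (abs_nonneg c) (sq_nonneg (v 0 + v 1))]
  · nlinarith [mul_nonneg (neg_nonneg.2 hc0.le) (sq_nonneg (v 0 - v 1))]

lemma sin_ne_zero_of_mem_Ioo {φ : ℝ} (hφ : φ ∈ Set.Ioo 0 (2 * π)) (hφπ : φ ≠ π) :
    sin φ ≠ 0 := by
  rw [← neg_ne_zero, ← Real.sin_sub_pi]
  exact (sin_eq_zero_iff_of_lt_of_lt (by linarith [hφ.1]) (by linarith [hφ.2])).not.2
    (sub_ne_zero.2 hφπ)

lemma eq_toEuclideanLin_of_mem_Eset {φ : ℝ} {f : ℝ² → ℝ²}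
    (hf₁ : ∀ t ∈ Set.Ico (0:ℝ) 1, f (pt t 0) = pt t 0)
    (hf₂ : ∀ t ∈ Set.Ico (0:ℝ) 1, f (t • pt (cos φ) (sin φ)) = pt 0 t) {p : ℝ²}
    (hp : p ∈ Eset φ) :
    p = (!![1, cos φ; 0, sin φ] : Matrix (Fin 2) (Fin 2) ℝ).toEuclideanLin (f p) := by
  rcases hp with ⟨t, ht, rfl⟩ | ⟨t, ht, rfl⟩
  · simp [hf₁ t ht, toEuclideanLin_pt]
  · rw [hf₂ t ht, toEuclideanLin_pt, smul_pt]
    simp [mul_comm]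

/-- `κ` on `E_φ` is controlled by `κ` of the images under the straightening map `f` to
`E_{π/2}`. -/
theorem menger_le_mul_menger_image (φ : ℝ) (hφ : φ ∈ Set.Ioo 0 (2 * π)) (hφπ : φ ≠ π)
    (f : EuclideanSpace ℝ (Fin 2) → EuclideanSpace ℝ (Fin 2))
    (hf₁ : ∀ t ∈ Set.Ico (0:ℝ) 1, f (pt t 0) = pt t 0)
    (hf₂ : ∀ t ∈ Set.Ico (0:ℝ) 1, f (t • pt (Real.cos φ) (Real.sin φ)) = pt 0 t) :
    ∃ c : ℝ, 0 < c ∧ ∀ x ∈ Eset φ, ∀ y ∈ Eset φ, ∀ z ∈ Eset φ,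
      menger x y z ≤ c * menger (f x) (f y) (f z) := by
  have hsin : sin φ ≠ 0 := sin_ne_zero_of_mem_Ioo hφ hφπ
  have hcos : |cos φ| < 1 := by
    rw [← sq_lt_one_iff_abs_lt_one, ← sin_sq_add_cos_sq φ]
    exact lt_add_of_pos_left _ (pow_pos (abs_pos.2 hsin) 2 |>.trans_eq (sq_abs _))
  set A : Matrix (Fin 2) (Fin 2) ℝ := !![1, cos φ; 0, sin φ]
  have hm : 0 < √(1 - |cos φ|) := Real.sqrt_pos.2 (by linarith)
  refine ⟨|A.det| / √(1 - |cos φ|) ^ 3, ?_, fun x hx y hy z hz => ?_⟩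
  · rw [show A.det = sin φ by simp [A, Matrix.det_fin_two_of]]
    exact div_pos (abs_pos.2 hsin) (pow_pos hm 3)
  calc menger x y z
      = menger (A.toEuclideanLin (f x)) (A.toEuclideanLin (f y)) (A.toEuclideanLin (f z)) := by
        rw [← eq_toEuclideanLin_of_mem_Eset hf₁ hf₂ hx, ← eq_toEuclideanLin_of_mem_Eset hf₁ hf₂ hy,
          ← eq_toEuclideanLin_of_mem_Eset hf₁ hf₂ hz]
    _ ≤ _ := menger_toEuclideanLin_le A hm (sqrt_one_sub_abs_mul_norm_le (cos_sq_add_sin_sq φ))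
        _ _ _
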